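/- arXiv:1402.2570 — 2 statements merged into one kernel-verified Lean document; each statement's English description precedes it below -/
import Mathlib

section
/- For every strict partition λ of n, the Schur P-function satisfies P_λ(X) = Σ_{S ∈ ShSYT^±(λ)} F_{Des(S)}(X), where the sum is over all signed standard shifted tableaux of shape λ with no signed entries on the main diagonal. -/
open scoped Classical

noncomputable section

/-! ### Formal power series in variables `x_0, x_1, x_2, …` over `ℚ`,
represented by their coefficient functions. -/

abbrev QS : Type := (ℕ →₀ ℕ) → ℚ

/-- Gessel's fundamental quasisymmetric function `F_D` of degree `n`:
the coefficient of a monomial `e` is `1` exactly if the unique weakly increasing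
sequence of variables with content `e` satisfies the descent condition
`i_j = i_{j+1} → j ∉ D` (positions `j = 1, …, n-1`). -/
def fundF (n : ℕ) (D : Set ℕ) : QS := fun e =>
  if ∃ f : Fin n → ℕ, Monotone f ∧
      (∀ (j : ℕ) (h : j + 1 < n), f ⟨j, Nat.lt_of_succ_lt h⟩ = f ⟨j + 1, h⟩ → (j + 1) ∉ D) ∧
      (∀ k : ℕ, e k = (Finset.univ.filter (fun p : Fin n => f p = k)).card)
  then (1 : ℚ) else 0

/-- The shifted fundamental quasisymmetric function
`G_P = Σ_{D ⊆ {1,…,n−1}, P ⊆ Spike(D)} F_D`, where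
`i ∈ Spike(D)` iff exactly one of `i-1, i` lies in `D`. -/
def fundG (n : ℕ) (P : Set ℕ) : QS :=
  ∑ D ∈ (Finset.Icc 1 (n - 1)).powerset,
    if ∀ i ∈ P, Xor' ((i - 1) ∈ D) (i ∈ D) then fundF n (↑D : Set ℕ) else 0

/-- A power series is symmetric if it is invariant under every permutation of
the variables. -/
def IsSymmetricFn (f : QS) : Prop :=
  ∀ (σ : Equiv.Perm ℕ) (e : ℕ →₀ ℕ), f (Finsupp.equivMapDomain σ e) = f e

/-! ### Partitions, Young diagrams, semistandard tableaux and Schur functions -/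

/-- A partition of `n`, as a weakly decreasing list of positive parts. -/
structure PartitionOf (n : ℕ) where
  parts : List ℕ
  sorted : parts.Pairwise (· ≥ ·)
  parts_pos : ∀ p ∈ parts, 0 < p
  sum_eq : parts.sum = n

/-- The cells `(r, j)`, `1 ≤ r ≤ ℓ`, `1 ≤ j ≤ λ_r`, of the Young diagram of a partition. -/
def PartitionOf.cells {n : ℕ} (μ : PartitionOf n) : Set (ℕ × ℕ) :=
  { c | ∃ h : c.1 - 1 < μ.parts.length,
      1 ≤ c.1 ∧ 1 ≤ c.2 ∧ c.2 ≤ μ.parts.get ⟨c.1 - 1, h⟩ }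

/-- A semistandard Young tableau of shape `μ`: entries (variable indices) weakly
increase along rows and strictly increase up columns. -/
structure SSYT {n : ℕ} (μ : PartitionOf n) where
  entry : ℕ × ℕ → ℕ
  zero_outside : ∀ c, c ∉ μ.cells → entry c = 0
  row_weak : ∀ r j j', (r, j) ∈ μ.cells → (r, j') ∈ μ.cells → j ≤ j' →
    entry (r, j) ≤ entry (r, j')
  col_strict : ∀ r r' j, (r, j) ∈ μ.cells → (r', j) ∈ μ.cells → r < r' →
    entry (r, j) < entry (r', j)

/-- The Schur function `s_μ = Σ_{T ∈ SSYT(μ)} X^T`. -/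
def schur (n : ℕ) (μ : PartitionOf n) : QS := fun e =>
  (Nat.card {T : SSYT μ // ∀ k : ℕ,
      Nat.card {c : ℕ × ℕ // c ∈ μ.cells ∧ T.entry c = k} = e k} : ℚ)

/-- A nonnegative integer combination of Schur functions. -/
def SchurPositive (f : QS) : Prop :=
  ∃ (k : ℕ) (m : Fin k → ℕ) (sh : (t : Fin k) → PartitionOf (m t)),
    f = ∑ t, schur (m t) (sh t)

/-! ### Strict partitions, shifted tableaux and Schur P-functions -/

/-- A strict partition of `n`, as a strictly decreasing list of positive parts. -/
structure StrictPartition (n : ℕ) where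
  parts : List ℕ
  sorted : parts.Pairwise (· > ·)
  parts_pos : ∀ p ∈ parts, 0 < p
  sum_eq : parts.sum = n

/-- The cells `(r, j)`, `1 ≤ r ≤ ℓ`, `r ≤ j ≤ λ_r + r - 1`, of the shifted Young
diagram of a strict partition. -/
def StrictPartition.cells {n : ℕ} (μ : StrictPartition n) : Set (ℕ × ℕ) :=
  { c | ∃ h : c.1 - 1 < μ.parts.length,
      1 ≤ c.1 ∧ c.1 ≤ c.2 ∧ c.2 ≤ μ.parts.get ⟨c.1 - 1, h⟩ + c.1 - 1 }

/-- A semistandard shifted tableau of shape `μ`.  An entry coded `2k+1` is the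
primed value `k′`, and an entry coded `2k+2` is the unprimed value `k`
(so that the code order is the order `0′ < 0 < 1′ < 1 < ⋯`).  Entries weakly
increase along rows and columns, each row has at most one `k′` for each `k`,
and each column has at most one `k` for each `k`. -/
structure ShSSYT {n : ℕ} (μ : StrictPartition n) where
  entry : ℕ × ℕ → ℕ
  zero_outside : ∀ c, c ∉ μ.cells → entry c = 0
  entry_pos : ∀ c ∈ μ.cells, 1 ≤ entry c
  row_weak : ∀ r j j', (r, j) ∈ μ.cells → (r, j') ∈ μ.cells → j ≤ j' →
    entry (r, j) ≤ entry (r, j')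
  col_weak : ∀ r r' j, (r, j) ∈ μ.cells → (r', j) ∈ μ.cells → r ≤ r' →
    entry (r, j) ≤ entry (r', j)
  row_primed : ∀ r j j', (r, j) ∈ μ.cells → (r, j') ∈ μ.cells →
    entry (r, j) = entry (r, j') → entry (r, j) % 2 = 1 → j = j'
  col_unprimed : ∀ r r' j, (r, j) ∈ μ.cells → (r', j) ∈ μ.cells →
    entry (r, j) = entry (r', j) → entry (r, j) % 2 = 0 → r = r'

/-- The Schur P-function `P_μ`: the sum of `X^{|S|}` over semistandard shifted
tableaux of shape `μ` with no primed entries on the main diagonal. -/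
def schurP (n : ℕ) (μ : StrictPartition n) : QS := fun e =>
  (Nat.card {S : ShSSYT μ //
      (∀ j : ℕ, (j, j) ∈ μ.cells → S.entry (j, j) % 2 = 0) ∧
      (∀ k : ℕ, Nat.card {c : ℕ × ℕ // c ∈ μ.cells ∧ (S.entry c - 1) / 2 = k} = e k)} : ℚ)

/-- A nonnegative integer combination of Schur P-functions. -/
def SchurPPositive (f : QS) : Prop :=
  ∃ (k : ℕ) (m : Fin k → ℕ) (sh : (t : Fin k) → StrictPartition (m t)),
    f = ∑ t, schurP (m t) (sh t)

/-! ### Standard (shifted) tableaux, descents, peaks, reading words -/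

/-- A standard shifted tableau of shape `μ`: the entries `1, …, n` each appear
once and increase along rows and columns. -/
structure ShSYT {n : ℕ} (μ : StrictPartition n) where
  entry : ℕ × ℕ → ℕ
  zero_outside : ∀ c, c ∉ μ.cells → entry c = 0
  bijOn : Set.BijOn entry μ.cells (Set.Icc 1 n)
  row_inc : ∀ r j j', (r, j) ∈ μ.cells → (r, j') ∈ μ.cells → j < j' →
    entry (r, j) < entry (r, j')
  col_inc : ∀ r r' j, (r, j) ∈ μ.cells → (r', j) ∈ μ.cells → r < r' →
    entry (r, j) < entry (r', j)

namespace ShSYT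

variable {n : ℕ} {μ : StrictPartition n}

/-- `i ∈ Des(T)` iff `i` lies in a strictly lower row than `i+1`. -/
def Des (T : ShSYT μ) : Set ℕ :=
  { i | ∃ c ∈ μ.cells, ∃ c' ∈ μ.cells, T.entry c = i ∧ T.entry c' = i + 1 ∧ c.1 < c'.1 }

/-- `i ∈ Peak(T)` iff `i - 1 ∉ Des(T)` and `i ∈ Des(T)`. -/
def Peak (T : ShSYT μ) : Set ℕ := { i | (i - 1) ∉ T.Des ∧ i ∈ T.Des }

/-- The cell containing the value `v`. -/
def cellOf (T : ShSYT μ) (v : ℕ) : ℕ × ℕ :=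
  Classical.epsilon (fun c => c ∈ μ.cells ∧ T.entry c = v)

/-- `before T u v` : the value `u` occurs before the value `v` in the reading word
of `T` (rows left to right, top row to bottom row, the top row being the one
with the largest row index). -/
def before (T : ShSYT μ) (u v : ℕ) : Prop :=
  (T.cellOf v).1 < (T.cellOf u).1 ∨
    ((T.cellOf u).1 = (T.cellOf v).1 ∧ (T.cellOf u).2 < (T.cellOf v).2)

end ShSYT

/-- A standard Young tableau of shape `μ`. -/
structure SYT {n : ℕ} (μ : PartitionOf n) where
  entry : ℕ × ℕ → ℕ
  zero_outside : ∀ c, c ∉ μ.cells → entry c = 0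
  bijOn : Set.BijOn entry μ.cells (Set.Icc 1 n)
  row_inc : ∀ r j j', (r, j) ∈ μ.cells → (r, j') ∈ μ.cells → j < j' →
    entry (r, j) < entry (r, j')
  col_inc : ∀ r r' j, (r, j) ∈ μ.cells → (r', j) ∈ μ.cells → r < r' →
    entry (r, j) < entry (r', j)

namespace SYT

variable {n : ℕ} {μ : PartitionOf n}

/-- `i ∈ Des(T)` iff `i` lies in a strictly lower row than `i+1`. -/
def Des (T : SYT μ) : Set ℕ :=
  { i | ∃ c ∈ μ.cells, ∃ c' ∈ μ.cells, T.entry c = i ∧ T.entry c' = i + 1 ∧ c.1 < c'.1 }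

/-- The cell containing the value `v`. -/
def cellOf (T : SYT μ) (v : ℕ) : ℕ × ℕ :=
  Classical.epsilon (fun c => c ∈ μ.cells ∧ T.entry c = v)

/-- Reading-word order on values (rows left to right, top row to bottom row). -/
def before (T : SYT μ) (u v : ℕ) : Prop :=
  (T.cellOf v).1 < (T.cellOf u).1 ∨
    ((T.cellOf u).1 = (T.cellOf v).1 ∧ (T.cellOf u).2 < (T.cellOf v).2)

end SYT

/-! ### Haiman's elementary (shifted) dual equivalence moves -/

/-- `posBtw lt x c y`: `c` occurs positionally between `x` and `y`,
where `lt` is the "occurs before" relation. -/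
def posBtw (lt : ℕ → ℕ → Prop) (x c y : ℕ) : Prop :=
  (lt x c ∧ lt c y) ∨ (lt y c ∧ lt c x)

/-- Swap the two values `a`, `b` in a filling. -/
def swapVals (a b : ℕ) (f : ℕ × ℕ → ℕ) : ℕ × ℕ → ℕ :=
  fun c => if f c = a then b else if f c = b then a else f c

/-- Swap the values of a function at `a` and `b`. -/
def swapFn {α : Type} (f : ℕ → α) (a b : ℕ) : ℕ → α :=
  fun v => if v = a then f b else if v = b then f a else f v

/-- The pair of values interchanged by Haiman's elementary shifted dual
equivalence move `b_i`, given the "occurs before" relation of the word: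
with `{a,b,c,d} = {i−1,i,i+1,i+2}`, if `a,b` are consecutive values, `c` is
consecutive with `a,b` and occurs between `a` and `b`, and `d` is consecutive
with `a,b,c` and occurs to the left of `c`, then `b_i` interchanges `a` and `b`;
otherwise it is the identity (`none`). -/
def bTarget (lt : ℕ → ℕ → Prop) (i : ℕ) : Option (ℕ × ℕ) :=
  if posBtw lt (i-1) (i+1) i ∧ lt (i+2) (i+1) then some (i-1, i)
  else if posBtw lt i (i-1) (i+1) ∧ lt (i+2) (i-1) then some (i, i+1)
  else if posBtw lt i (i+2) (i+1) ∧ lt (i-1) (i+2) then some (i, i+1)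
  else if posBtw lt (i+1) i (i+2) ∧ lt (i-1) i then some (i+1, i+2)
  else none

/-- The entry function of `b_i(T)` for a standard shifted tableau `T`. -/
def bRawEntry {n : ℕ} {μ : StrictPartition n} (i : ℕ) (T : ShSYT μ) : ℕ × ℕ → ℕ :=
  match bTarget T.before i with
  | some (a, b) => swapVals a b T.entry
  | none => T.entry

/-- Haiman's elementary shifted dual equivalence involution `b_i` on standard
shifted tableaux (acting through the reading word). -/
def bMove {n : ℕ} {μ : StrictPartition n} (i : ℕ) (T : ShSYT μ) : ShSYT μ :=
  if h : ∃ T' : ShSYT μ, T'.entry = bRawEntry i T then h.choose else T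

/-- The pair of values interchanged by the elementary dual equivalence move
`d_i`: if `i` occurs between `i-1` and `i+1` the move is the identity; if `i+1`
occurs between `i-1` and `i` it interchanges `i-1` and `i`; if `i-1` occurs
between `i` and `i+1` it interchanges `i` and `i+1`. -/
def dTarget (lt : ℕ → ℕ → Prop) (i : ℕ) : Option (ℕ × ℕ) :=
  if posBtw lt (i-1) (i+1) i then some (i-1, i)
  else if posBtw lt i (i-1) (i+1) then some (i, i+1)
  else none

/-- The entry function of `d_i(T)` for a standard Young tableau `T`. -/
def dRawEntry {n : ℕ} {μ : PartitionOf n} (i : ℕ) (T : SYT μ) : ℕ × ℕ → ℕ :=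
  match dTarget T.before i with
  | some (a, b) => swapVals a b T.entry
  | none => T.entry

/-- Haiman's elementary dual equivalence involution `d_i` on standard Young
tableaux (acting through the reading word). -/
def dMove {n : ℕ} {μ : PartitionOf n} (i : ℕ) (T : SYT μ) : SYT μ :=
  if h : ∃ T' : SYT μ, T'.entry = dRawEntry i T then h.choose else T

/-! ### Restricted classes and restricted statistics -/

/-- The equivalence class of `T` generated by the involutions `φ_j, …, φ_i`. -/
def classOf {A : Type} (φ : ℕ → A → A) (j i : ℕ) (T : A) : Set A :=
  { U | Relation.ReflTransGen (fun x y => ∃ k, j ≤ k ∧ k ≤ i ∧ φ k x = y) T U }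

/-- The restricted descent set `Des_{(j,i)}(T) = (Des(T) ∩ {j−1,…,i}) − (j−2)`. -/
def resDes {A : Type} (Des : A → Set ℕ) (j i : ℕ) (T : A) : Set ℕ :=
  (fun x => x - (j - 2)) '' (Des T ∩ Set.Icc (j - 1) i)

/-- The restricted peak set `Peak_{(j,i)}(T) = (Peak(T) ∩ {j−1,…,i+1}) − (j−2)`. -/
def resPeak {A : Type} (Peak : A → Set ℕ) (j i : ℕ) (T : A) : Set ℕ :=
  (fun x => x - (j - 2)) '' (Peak T ∩ Set.Icc (j - 1) (i + 1))

/-- `Σ_{U ∈ [T]_{(j,i)}} F_{Des_{(j,i)}(U)}`, with `F`'s of degree `m`. -/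
def classFSum {A : Type} (Des : A → Set ℕ) (φ : ℕ → A → A) (m j i : ℕ) (T : A) : QS :=
  ∑ᶠ U ∈ classOf φ j i T, fundF m (resDes Des j i U)

/-- `Σ_{U ∈ [T]_{(j,i)}} G_{Peak_{(j,i)}(U)}`, with `G`'s of degree `m`. -/
def classGSum {A : Type} (Peak : A → Set ℕ) (φ : ℕ → A → A) (m j i : ℕ) (T : A) : QS :=
  ∑ᶠ U ∈ classOf φ j i T, fundG m (resPeak Peak j i U)

/-! ### (Strong and weak) dual equivalence -/

/-- A (strong) dual equivalence for `(A, Des)`: a family of involutions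
`φ_i`, `1 < i < n`, satisfying axioms (i)–(iv). -/
structure IsDualEquiv (n : ℕ) {A : Type} (Des : A → Set ℕ) (φ : ℕ → A → A) : Prop where
  invol : ∀ i, 1 < i → i < n → ∀ T, φ i (φ i T) = T
  fixed_iff : ∀ i, 1 < i → i < n → ∀ T, (φ i T = T ↔ ((i - 1) ∈ Des T ↔ i ∈ Des T))
  des_far : ∀ i, 1 < i → i < n → ∀ T, φ i T ≠ T →
    ∀ h, (h < i - 2 ∨ i + 1 < h) → (h ∈ Des T ↔ h ∈ Des (φ i T))
  des_lo : ∀ i, 1 < i → i < n → ∀ T, φ i T ≠ T →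
    ¬((i - 2) ∈ Des T ↔ (i - 2) ∈ Des (φ i T)) → φ (i - 1) T ≠ T
  des_hi : ∀ i, 1 < i → i < n → ∀ T, φ i T ≠ T →
    ¬((i + 1) ∈ Des T ↔ (i + 1) ∈ Des (φ i T)) → φ (i + 1) T ≠ T
  des_swap : ∀ i, 1 < i → i < n → ∀ T, φ i T ≠ T →
    (((i - 1) ∈ Des T ↔ (i - 1) ∉ Des (φ i T)) ∧ (i ∈ Des T ↔ i ∉ Des (φ i T)))
  commutes : ∀ i j, 1 < i → i < n → 1 < j → j < n → j + 3 ≤ i →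
    ∀ T, φ j (φ i T) = φ i (φ j T)
  local_schur : ∀ i j, 1 < j → i < n → 1 ≤ i - j → i - j ≤ 3 → ∀ T,
    ∃ (m : ℕ) (ν : PartitionOf m), classFSum Des φ (i - j + 2) j i T = schur m ν

/-- A weak dual equivalence for `(A, Des)`: axioms (i), (ii), (iii) together
with the local conditions (iv-a) and (iv-b). -/
structure IsWeakDualEquiv (n : ℕ) {A : Type} (Des : A → Set ℕ) (φ : ℕ → A → A) : Prop where
  invol : ∀ i, 1 < i → i < n → ∀ T, φ i (φ i T) = T
  fixed_iff : ∀ i, 1 < i → i < n → ∀ T, (φ i T = T ↔ ((i - 1) ∈ Des T ↔ i ∈ Des T))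
  des_far : ∀ i, 1 < i → i < n → ∀ T, φ i T ≠ T →
    ∀ h, (h < i - 2 ∨ i + 1 < h) → (h ∈ Des T ↔ h ∈ Des (φ i T))
  des_lo : ∀ i, 1 < i → i < n → ∀ T, φ i T ≠ T →
    ¬((i - 2) ∈ Des T ↔ (i - 2) ∈ Des (φ i T)) → φ (i - 1) T ≠ T
  des_hi : ∀ i, 1 < i → i < n → ∀ T, φ i T ≠ T →
    ¬((i + 1) ∈ Des T ↔ (i + 1) ∈ Des (φ i T)) → φ (i + 1) T ≠ T
  des_swap : ∀ i, 1 < i → i < n → ∀ T, φ i T ≠ T →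
    (((i - 1) ∈ Des T ↔ (i - 1) ∉ Des (φ i T)) ∧ (i ∈ Des T ↔ i ∉ Des (φ i T)))
  commutes : ∀ i j, 1 < i → i < n → 1 < j → j < n → j + 3 ≤ i →
    ∀ T, φ j (φ i T) = φ i (φ j T)
  iva_pos : ∀ i, 2 < i → i < n → ∀ T, SchurPositive (classFSum Des φ 3 (i - 1) i T)
  iva_des : ∀ i, 2 < i → i + 1 < n → ∀ T,
    φ (i - 1) T ≠ T → φ i T ≠ T → φ (i + 1) T ≠ T →
    φ (i - 1) (φ i T) ≠ φ i T → φ i (φ i T) ≠ φ i T → φ (i + 1) (φ i T) ≠ φ i T →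
    resDes Des (i - 1) i '' classOf φ (i - 1) i T
      = resDes Des i (i + 1) '' classOf φ i (i + 1) T
  ivb_pos : ∀ i, 3 < i → i < n → ∀ T, SchurPositive (classFSum Des φ 4 (i - 2) i T)
  ivb_chain : ∀ i, 3 < i → i + 1 < n → ∀ T,
    φ (i + 1) T ≠ T → φ (i + 1) (φ i T) ≠ φ i T →
    φ (i + 1) (φ i (φ (i - 2) T)) = φ i (φ (i - 2) T) →
    ∀ m, 1 ≤ m →
      φ (i - 2) ((fun x => φ i (φ (i - 2) x))^[m - 1] (φ i T)) ≠
        (fun x => φ i (φ (i - 2) x))^[m - 1] (φ i T) →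
      φ i (φ (i - 2) ((fun x => φ i (φ (i - 2) x))^[m - 1] (φ i T))) ≠
        φ (i - 2) ((fun x => φ i (φ (i - 2) x))^[m - 1] (φ i T)) →
      φ (i + 1) ((fun x => φ i (φ (i - 2) x))^[m] (φ i T)) ≠
        (fun x => φ i (φ (i - 2) x))^[m] (φ i T)

/-! ### Shifted dual equivalence -/

/-- Axioms (i), (ii), (iii) of shifted dual equivalence for involutions
`φ_i`, `1 < i < n - 1`. -/
structure ShiftedDEBasic (n : ℕ) {A : Type} (Peak : A → Set ℕ) (φ : ℕ → A → A) : Prop where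
  invol : ∀ i, 1 < i → i + 1 < n → ∀ T, φ i (φ i T) = T
  fixed_iff : ∀ i, 1 < i → i + 1 < n → ∀ T,
    (φ i T = T ↔ (i ∉ Peak T ∧ (i + 1) ∉ Peak T))
  peak_move : ∀ i, 1 < i → i + 1 < n → ∀ T, φ i T ≠ T →
    (i ∈ Peak T ↔ (i + 1) ∈ Peak (φ i T))
  peak_far : ∀ i, 1 < i → i + 1 < n → ∀ T, φ i T ≠ T →
    ∀ h, (h ≤ i - 2 ∨ i + 3 ≤ h) → (h ∈ Peak T ↔ h ∈ Peak (φ i T))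
  commutes : ∀ i j, 1 < i → i + 1 < n → 1 < j → j + 1 < n → j + 4 ≤ i →
    ∀ T, φ j (φ i T) = φ i (φ j T)

/-- A (strong) shifted dual equivalence for `(A, Peak)`: axioms (i)–(iii)
together with the local Schur-P condition (iv). -/
structure IsShiftedDualEquiv (n : ℕ) {A : Type} (Peak : A → Set ℕ) (φ : ℕ → A → A)
    extends ShiftedDEBasic n Peak φ : Prop where
  local_P : ∀ i j, 1 < j → i + 1 < n → 1 ≤ i - j → i - j ≤ 4 → ∀ T,
    ∃ (m : ℕ) (ν : StrictPartition m), classGSum Peak φ (i - j + 4) j i T = schurP m ν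

/-! ### Signed permutations and the involutions of Definition 5.1 -/

/-- A signed permutation of `n`, recorded by the position `w.1 v` of each value
`v ∈ {1,…,n}` together with its sign `w.2 v` (`true` = primed). -/
def IsSignedPerm (n : ℕ) (w : (ℕ → ℕ) × (ℕ → Bool)) : Prop :=
  Set.BijOn w.1 (Set.Icc 1 n) (Set.Icc 1 n) ∧
  ∀ v, v ∉ Set.Icc 1 n → w.1 v = 0 ∧ w.2 v = false

abbrev SignedPerm (n : ℕ) : Type := { w : (ℕ → ℕ) × (ℕ → Bool) // IsSignedPerm n w }

/-- `i ∈ Des(w)` iff `i` is unprimed and appears to the right of `i+1`, or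
`i+1` is primed and appears to the right of `i`. -/
def rawSPDes (n : ℕ) (w : (ℕ → ℕ) × (ℕ → Bool)) (i : ℕ) : Prop :=
  1 ≤ i ∧ i < n ∧
    ((w.2 i = false ∧ w.1 (i + 1) < w.1 i) ∨ (w.2 (i + 1) = true ∧ w.1 i < w.1 (i + 1)))

def SignedPerm.Des {n : ℕ} (w : SignedPerm n) : Set ℕ := { i | rawSPDes n w.1 i }

/-- The leftmost of the values `i-1, i, i+1` (w.r.t. the position function `p`). -/
def leftV (p : ℕ → ℕ) (i : ℕ) : ℕ :=
  if p (i - 1) < p i ∧ p (i - 1) < p (i + 1) then i - 1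
  else if p i < p (i + 1) then i
  else i + 1

/-- The rightmost of the values `i-1, i, i+1` (w.r.t. the position function `p`). -/
def rightV (p : ℕ → ℕ) (i : ℕ) : ℕ :=
  if p i < p (i - 1) ∧ p (i + 1) < p (i - 1) then i - 1
  else if p (i + 1) < p i then i
  else i + 1

/-- The involution of Definition 5.1 on raw data: with `{a,b,c} = {i−1,i,i+1}`,
`a` leftmost and `c` rightmost, if `i ∉ Spike(w)` do nothing; else if exactly one
of `b, c` is primed, interchange the signs of `b` and `c`; else interchange the
values `a` and `c`, leaving the signs in the original positions. -/
def rawPhi (n i : ℕ) (w : (ℕ → ℕ) × (ℕ → Bool)) : (ℕ → ℕ) × (ℕ → Bool) :=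
  if Xor' (rawSPDes n w (i - 1)) (rawSPDes n w i) then
    let a := leftV w.1 i
    let c := rightV w.1 i
    let b := 3 * i - (a + c)
    if w.2 b ≠ w.2 c then (w.1, swapFn w.2 b c)
    else (swapFn w.1 a c, swapFn w.2 a c)
  else w

/-- The involution `φ_i` of Definition 5.1 on signed permutations. -/
def phiS (n : ℕ) (i : ℕ) (w : SignedPerm n) : SignedPerm n :=
  if h : IsSignedPerm n (rawPhi n i w.1) then ⟨rawPhi n i w.1, h⟩ else w

/-! ### Signed standard shifted tableaux and the involutions of Definition 5.2 -/

/-- A signed standard shifted tableau of shape `μ`: a standard shifted tableau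
together with a sign for each value (`true` = primed). -/
structure SignedShSYT {n : ℕ} (μ : StrictPartition n) where
  entry : ℕ × ℕ → ℕ
  sign : ℕ → Bool
  zero_outside : ∀ c, c ∉ μ.cells → entry c = 0
  sign_outside : ∀ v, v ∉ Set.Icc 1 n → sign v = false
  bijOn : Set.BijOn entry μ.cells (Set.Icc 1 n)
  row_inc : ∀ r j j', (r, j) ∈ μ.cells → (r, j') ∈ μ.cells → j < j' →
    entry (r, j) < entry (r, j')
  col_inc : ∀ r r' j, (r, j) ∈ μ.cells → (r', j) ∈ μ.cells → r < r' →
    entry (r, j) < entry (r', j)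

namespace SignedShSYT

variable {n : ℕ} {μ : StrictPartition n}

/-- `i ∈ Des(S)` iff `i` is unprimed and in a strictly lower row than `i+1`, or
`i+1` is primed and in a weakly lower row than `i`. -/
def Des (S : SignedShSYT μ) : Set ℕ :=
  { i | ∃ c ∈ μ.cells, ∃ c' ∈ μ.cells, S.entry c = i ∧ S.entry c' = i + 1 ∧
      ((S.sign i = false ∧ c.1 < c'.1) ∨ (S.sign (i + 1) = true ∧ c'.1 ≤ c.1)) }

/-- The cell containing the value `v`. -/
def cellOf (S : SignedShSYT μ) (v : ℕ) : ℕ × ℕ :=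
  Classical.epsilon (fun c => c ∈ μ.cells ∧ S.entry c = v)

/-- Reading-word order on values. -/
def before (S : SignedShSYT μ) (u v : ℕ) : Prop :=
  (S.cellOf v).1 < (S.cellOf u).1 ∨
    ((S.cellOf u).1 = (S.cellOf v).1 ∧ (S.cellOf u).2 < (S.cellOf v).2)

end SignedShSYT

/-- The first of the values `i-1, i, i+1` w.r.t. an "occurs before" relation. -/
def firstV (lt : ℕ → ℕ → Prop) (i : ℕ) : ℕ :=
  if lt (i - 1) i ∧ lt (i - 1) (i + 1) then i - 1
  else if lt i (i + 1) then i
  else i + 1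

/-- The last of the values `i-1, i, i+1` w.r.t. an "occurs before" relation. -/
def lastV (lt : ℕ → ℕ → Prop) (i : ℕ) : ℕ :=
  if lt i (i - 1) ∧ lt (i + 1) (i - 1) then i - 1
  else if lt (i + 1) i then i
  else i + 1

/-- The raw action of the map `ψ_i` of Definition 5.2 on a signed standard
shifted tableau, producing the new entry function and the new sign function:
with `{a,b,c} = {i−1,i,i+1}`, `a` first and `c` last in the reading word:
if `i ∉ Spike(S)` do nothing; else if `a` and `c` are in the same column, toggle
the sign on `c`; else if exactly one of `b, c` is signed, swap the signs of `b`
and `c`; else swap the values `a` and `c`, leaving the signs in the original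
positions. -/
def rawPsi {n : ℕ} {μ : StrictPartition n} (i : ℕ) (S : SignedShSYT μ) :
    (ℕ × ℕ → ℕ) × (ℕ → Bool) :=
  if Xor' ((i - 1) ∈ S.Des) (i ∈ S.Des) then
    let a := firstV S.before i
    let c := lastV S.before i
    let b := 3 * i - (a + c)
    if (S.cellOf a).2 = (S.cellOf c).2 then
      (S.entry, Function.update S.sign c (!(S.sign c)))
    else if S.sign b ≠ S.sign c then (S.entry, swapFn S.sign b c)
    else (swapVals a c S.entry, swapFn S.sign a c)
  else (S.entry, S.sign)

/-- The map `ψ_i` of Definition 5.2 on signed standard shifted tableaux. -/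
def psiMove {n : ℕ} {μ : StrictPartition n} (i : ℕ) (S : SignedShSYT μ) : SignedShSYT μ :=
  if h : ∃ S' : SignedShSYT μ, S'.entry = (rawPsi i S).1 ∧ S'.sign = (rawPsi i S).2
  then h.choose else S

/-! ### Isomorphisms of restricted classes -/

/-- The restricted class `([T]_{(j,i)}, Peak_{(j,i)})` under `φ_j, …, φ_i` is
isomorphic to `(ShSYT(ν), Peak)` under Haiman's involutions `b`. -/
def ResIso {A : Type} (Peak : A → Set ℕ) (φ : ℕ → A → A) (j i : ℕ) (T : A)
    {m : ℕ} (ν : StrictPartition m) : Prop :=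
  ∃ ψ : A → ShSYT ν,
    Set.BijOn ψ (classOf φ j i T) Set.univ ∧
    (∀ U ∈ classOf φ j i T, resPeak Peak j i U = ShSYT.Peak (ψ U)) ∧
    (∀ k, j ≤ k → k ≤ i → ∀ U ∈ classOf φ j i T, ψ (φ k U) = bMove (k - j + 2) (ψ U))

/-- The restricted classes `[T]_{(j,i)}` and `[S]_{(j,i)}` are isomorphic
(as sets with the restricted peak statistic and the involutions `φ_j, …, φ_i`). -/
def ResClassIso {A : Type} (Peak : A → Set ℕ) (φ : ℕ → A → A) (j i : ℕ) (T S : A) : Prop :=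
  ∃ ψ : A → A,
    Set.BijOn ψ (classOf φ j i T) (classOf φ j i S) ∧
    (∀ U ∈ classOf φ j i T, resPeak Peak j i U = resPeak Peak j i (ψ U)) ∧
    (∀ k, j ≤ k → k ≤ i → ∀ U ∈ classOf φ j i T, ψ (φ k U) = φ k (ψ U))

end

/-!
Standardization. Order the cells of a semistandard shifted tableau `T` by entry, breaking ties
between equal primed letters by row and between equal unprimed letters by column (a linear order,
since `k′` occurs at most once per row and `k` at most once per column). Numbering the cells in
this order, signed by the primes of `T`, gives a signed standard shifted tableau `S`, and the
letters read in this order form a weakly increasing sequence `f` with content `|T|`. The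
semistandard conditions on `T` say exactly that `f` can stay constant from `i` to `i + 1` only if
`i ∉ Des(S)`: within one letter the primed cells come first, in strictly increasing rows, then the
unprimed ones, in weakly decreasing rows. Hence `T ↦ (S, f)` is a bijection onto the pairs counted
by `Σ_S F_{Des(S)}`, each `F_{Des(S)}` contributing `0` or `1` to a coefficient because a weakly
increasing sequence is determined by its content.
-/

open Finset

theorem List.getElem_add_sub_le_of_pairwise_gt {l : List ℕ} (hl : l.Pairwise (· > ·))
    {i j : ℕ} (hij : i ≤ j) (hj : j < l.length) : l[j] + (j - i) ≤ l[i] := by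
  induction j, hij using Nat.le_induction with
  | base => simp
  | succ j hij ih =>
    have hstep := List.pairwise_iff_getElem.mp hl j (j + 1) (by omega) hj (by omega)
    have := ih (by omega)
    omega

theorem Monotone.eq_of_card_filter_eq {α : Type*} [LinearOrder α] {n : ℕ} {f g : Fin n → α}
    (hf : Monotone f) (hg : Monotone g) (h : ∀ k, #{p | f p = k} = #{p | g p = k}) :
    f = g := by
  have hmap : univ.val.map f = univ.val.map g := by
    ext k
    simp only [Multiset.count_map, eq_comm (a := k)]
    exact h k
  rw [Fin.univ_val_map, Fin.univ_val_map, Multiset.coe_eq_coe] at hmap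
  exact List.ofFn_injective (hmap.eq_of_sortedLE hf.sortedLE_ofFn hg.sortedLE_ofFn)

namespace Finset

variable {α β : Type*} [LinearOrder β]

def rankBy (s : Finset α) (K : α → β) (a : α) : ℕ := #{b ∈ s | K b ≤ K a}

variable {s : Finset α} {K : α → β}

theorem rankBy_lt_rankBy_iff {a b : α} (hb : b ∈ s) : s.rankBy K a < s.rankBy K b ↔ K a < K b := by
  constructor
  · intro h
    by_contra hba
    refine absurd h (not_lt.mpr (card_le_card fun c hc => ?_))
    simp only [mem_filter] at hc ⊢
    exact ⟨hc.1, hc.2.trans (not_lt.mp hba)⟩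
  · intro h
    refine card_lt_card ⟨fun c hc => ?_, fun hsub => ?_⟩
    · simp only [mem_filter] at hc ⊢
      exact ⟨hc.1, hc.2.trans h.le⟩
    · have := (mem_filter.mp (hsub (mem_filter.mpr ⟨hb, le_rfl⟩))).2
      exact absurd h (not_lt.mpr this)

theorem rankBy_mem_Icc {a : α} (ha : a ∈ s) : s.rankBy K a ∈ Set.Icc 1 #s :=
  ⟨card_pos.mpr ⟨a, mem_filter.mpr ⟨ha, le_rfl⟩⟩, card_filter_le _ _⟩

theorem bijOn_rankBy (hK : Set.InjOn K s) : Set.BijOn (s.rankBy K) s (Set.Icc 1 #s) := by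
  have hinj : Set.InjOn (s.rankBy K) s := fun a ha b hb hab =>
    hK ha hb (le_antisymm (not_lt.mp fun h => (rankBy_lt_rankBy_iff ha).mpr h |>.ne' hab)
      (not_lt.mp fun h => (rankBy_lt_rankBy_iff hb).mpr h |>.ne hab))
  refine ⟨fun a ha => rankBy_mem_Icc ha, hinj, ?_⟩
  have himage : s.image (s.rankBy K) = Icc 1 #s := by
    refine eq_of_subset_of_card_le (fun v hv => ?_) ?_
    · obtain ⟨a, ha, rfl⟩ := mem_image.mp hv
      simpa using rankBy_mem_Icc (K := K) ha
    · rw [card_image_of_injOn hinj, Nat.card_Icc]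
      omega
  intro v hv
  have : v ∈ s.image (s.rankBy K) := himage ▸ by simpa using hv
  simpa using this

theorem eq_rankBy_of_bijOn {lab : α → ℕ} (hlab : Set.BijOn lab s (Set.Icc 1 #s))
    (hlt : ∀ a ∈ s, ∀ b ∈ s, lab a < lab b ↔ K a < K b) {a : α} (ha : a ∈ s) :
    lab a = s.rankBy K a := by
  have hfilter : {b ∈ s | K b ≤ K a} = {b ∈ s | lab b ≤ lab a} :=
    filter_congr fun b hb => by rw [← not_lt, ← not_lt, hlt a ha b hb]
  have himage : {b ∈ s | lab b ≤ lab a}.image lab = Icc 1 (lab a) := by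
    ext v
    simp only [mem_image, mem_filter, mem_Icc]
    constructor
    · rintro ⟨b, ⟨hb, hle⟩, rfl⟩
      exact ⟨(hlab.mapsTo hb).1, hle⟩
    · rintro ⟨h1, h2⟩
      obtain ⟨b, hb, rfl⟩ := hlab.surjOn ⟨h1, h2.trans (hlab.mapsTo ha).2⟩
      exact ⟨b, ⟨hb, h2⟩, rfl⟩
  have hcard := card_image_of_injOn (s := {b ∈ s | lab b ≤ lab a})
    (hlab.injOn.mono fun b hb => (mem_filter.mp hb).1)
  rw [himage, Nat.card_Icc] at hcard
  rw [rankBy, hfilter]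
  omega

end Finset

namespace StrictPartition

variable {n : ℕ} {lam : StrictPartition n}

theorem mk_mem_cells_of_le {r r' j j' : ℕ} (h : (r, j) ∈ lam.cells)
    (h' : (r', j') ∈ lam.cells) (hr : r ≤ r') : (r, j') ∈ lam.cells := by
  obtain ⟨hlen, h1, -, -⟩ := h
  obtain ⟨hlen', -, h2', h3'⟩ := h'
  have := List.getElem_add_sub_le_of_pairwise_gt lam.sorted (i := r - 1) (j := r' - 1)
    (by omega) hlen'
  exact ⟨hlen, h1, by omega, by simp only [List.get_eq_getElem] at h3' ⊢; omega⟩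

variable (lam)

def cellsFinset : Finset (ℕ × ℕ) :=
  univ.biUnion fun i : Fin lam.parts.length =>
    (Icc ((i : ℕ) + 1) (lam.parts[(i : ℕ)] + i)).image fun j => ((i : ℕ) + 1, j)

theorem mem_cellsFinset {c : ℕ × ℕ} : c ∈ lam.cellsFinset ↔ c ∈ lam.cells := by
  obtain ⟨r, j⟩ := c
  simp only [cellsFinset, mem_biUnion, mem_image, mem_Icc, Prod.mk.injEq, mem_univ, true_and]
  constructor
  · rintro ⟨i, j, ⟨h1, h2⟩, rfl, rfl⟩
    exact ⟨by simp, by omega, by omega, by simp; omega⟩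
  · rintro ⟨hlen, h1, h2, h3⟩
    simp only [List.get_eq_getElem] at h3
    exact ⟨⟨r - 1, hlen⟩, j, ⟨by simp; omega, by simp; omega⟩, by simp; omega, rfl⟩

@[simp]
theorem coe_cellsFinset : (lam.cellsFinset : Set (ℕ × ℕ)) = lam.cells :=
  Set.ext fun _ => mem_cellsFinset lam

theorem card_cellsFinset : #lam.cellsFinset = n := by
  rw [cellsFinset, card_biUnion]
  · have hrow (i : Fin lam.parts.length) :
        #((Icc ((i : ℕ) + 1) (lam.parts[(i : ℕ)] + i)).image fun j => ((i : ℕ) + 1, j)) =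
          lam.parts[(i : ℕ)] := by
      rw [card_image_of_injective _ (Prod.mk_right_injective _), Nat.card_Icc]
      omega
    rw [sum_congr rfl fun i _ => hrow i, Fin.sum_univ_getElem, lam.sum_eq]
  · intro i _ i' _ hii'
    simp only [Function.onFun, disjoint_left, mem_image]
    rintro _ ⟨_, _, rfl⟩ ⟨_, _, h⟩
    exact hii' (Fin.ext (by simpa using (Prod.mk.inj h).1.symm))

end StrictPartition

/-! ### Fundamental quasisymmetric functions as counts -/

section FundamentalSeq

variable {n : ℕ}

/-- The letter that `f` assigns to the value `v ∈ {1, …, n}`, which sits at position `v - 1`. -/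
def letterAt (f : Fin n → ℕ) (v : ℕ) : ℕ := if h : v - 1 < n then f ⟨v - 1, h⟩ else 0

theorem letterAt_of_mem_Icc (f : Fin n → ℕ) {v : ℕ} (hv : v ∈ Set.Icc 1 n) :
    letterAt f v = f ⟨v - 1, by have := hv.1; have := hv.2; omega⟩ :=
  dif_pos (by have := hv.1; have := hv.2; omega)

theorem Monotone.letterAt_le {f : Fin n → ℕ} (hf : Monotone f) {u v : ℕ} (hu : 1 ≤ u)
    (huv : u ≤ v) (hv : v ≤ n) : letterAt f u ≤ letterAt f v := by
  rw [letterAt_of_mem_Icc f ⟨hu, huv.trans hv⟩, letterAt_of_mem_Icc f ⟨hu.trans huv, hv⟩]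
  exact hf (Fin.mk_le_mk.mpr (by omega))

theorem card_letterAt_eq_of_bijOn {α : Type*} {s : Set α} {lab : α → ℕ}
    (hlab : Set.BijOn lab s (Set.Icc 1 n)) (f : Fin n → ℕ) (k : ℕ) :
    Nat.card {a // a ∈ s ∧ letterAt f (lab a) = k} = #{p | f p = k} := by
  have hlt {a : α} (ha : a ∈ s) : lab a - 1 < n := by
    have := hlab.mapsTo ha
    simp only [Set.mem_Icc] at this
    omega
  have hpre (p : Fin n) := hlab.surjOn (⟨by omega, p.2⟩ : (p : ℕ) + 1 ∈ Set.Icc 1 n)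
  let E : {a // a ∈ s ∧ letterAt f (lab a) = k} ≃ {p : Fin n // f p = k} :=
    { toFun a := ⟨⟨lab a - 1, hlt a.2.1⟩,
        by rw [← letterAt_of_mem_Icc f (hlab.mapsTo a.2.1)]; exact a.2.2⟩
      invFun p := ⟨(hpre p).choose, (hpre p).choose_spec.1, by
        rw [(hpre p).choose_spec.2, letterAt_of_mem_Icc f ⟨by omega, p.1.2⟩]
        exact p.2⟩
      left_inv a := by
        have := (hlab.mapsTo a.2.1).1
        refine Subtype.ext (hlab.injOn (hpre _).choose_spec.1 a.2.1 ?_)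
        rw [(hpre _).choose_spec.2]
        simp only
        omega
      right_inv p := by
        apply Subtype.ext
        apply Fin.ext
        simp only [(hpre p.1).choose_spec.2]
        omega }
  rw [Nat.card_congr E, Nat.card_eq_fintype_card, Fintype.card_subtype]

def IsFundSeq (n : ℕ) (D : Set ℕ) (e : ℕ →₀ ℕ) (f : Fin n → ℕ) : Prop :=
  Monotone f ∧
    (∀ (j : ℕ) (h : j + 1 < n), f ⟨j, Nat.lt_of_succ_lt h⟩ = f ⟨j + 1, h⟩ → (j + 1) ∉ D) ∧
    (∀ k : ℕ, e k = #{p | f p = k})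

variable {D : Set ℕ} {e : ℕ →₀ ℕ}

theorem IsFundSeq.unique {D' : Set ℕ} {f g : Fin n → ℕ} (hf : IsFundSeq n D e f)
    (hg : IsFundSeq n D' e g) : f = g :=
  hf.1.eq_of_card_filter_eq hg.1 fun k => (hf.2.2 k).symm.trans (hg.2.2 k)

instance (D : Set ℕ) (e : ℕ →₀ ℕ) : Subsingleton {f : Fin n → ℕ // IsFundSeq n D e f} :=
  ⟨fun f g => Subtype.ext (f.2.unique g.2)⟩

theorem fundF_eq_card (D : Set ℕ) (e : ℕ →₀ ℕ) :
    fundF n D e = Nat.card {f : Fin n → ℕ // IsFundSeq n D e f} := by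
  change (if ∃ f, IsFundSeq n D e f then (1 : ℚ) else 0) = _
  split_ifs with h
  · obtain ⟨f, hf⟩ := h
    rw [Nat.card_of_subsingleton (⟨f, hf⟩ : {f // IsFundSeq n D e f}), Nat.cast_one]
  · have : IsEmpty {f // IsFundSeq n D e f} := ⟨fun f => h ⟨f, f.2⟩⟩
    rw [Nat.card_of_isEmpty, Nat.cast_zero]

theorem IsFundSeq.notMem_of_letterAt_eq {f : Fin n → ℕ} (hf : IsFundSeq n D e f) {u v : ℕ}
    (hu : 1 ≤ u) (hv : v ≤ n) (h : letterAt f u = letterAt f v) :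
    ∀ w, u ≤ w → w < v → w ∉ D := by
  intro w huw hwv
  have h1 : letterAt f u ≤ letterAt f w := hf.1.letterAt_le hu huw (by omega)
  have h2 : letterAt f w ≤ letterAt f (w + 1) := hf.1.letterAt_le (by omega) (by omega) (by omega)
  have h3 : letterAt f (w + 1) ≤ letterAt f v := hf.1.letterAt_le (by omega) hwv hv
  obtain ⟨m, rfl⟩ : ∃ m, w = m + 1 := ⟨w - 1, by omega⟩
  apply hf.2.1 m (by omega)
  have hstep : letterAt f (m + 1) = letterAt f (m + 1 + 1) := by omega
  simpa only [letterAt_of_mem_Icc f (v := m + 1) ⟨by omega, by omega⟩,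
    letterAt_of_mem_Icc f (v := m + 1 + 1) ⟨by omega, by omega⟩, Nat.add_sub_cancel] using hstep

end FundamentalSeq

/-! ### Standardization of semistandard shifted tableaux -/

def letterCode (k : ℕ) (primed : Bool) : ℕ := 2 * k + if primed then 1 else 2

section letterCode

variable {k k' : ℕ} {b b' : Bool}

@[simp]
theorem letterCode_sub_one_div_two : (letterCode k b - 1) / 2 = k := by
  unfold letterCode; split <;> omega

@[simp]
theorem letterCode_mod_two : letterCode k b % 2 = if b then 1 else 0 := by
  cases b <;> simp [letterCode]

theorem one_le_letterCode : 1 ≤ letterCode k b := by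
  cases b <;> simp [letterCode]

theorem letterCode_lt_letterCode (h : k < k') : letterCode k b < letterCode k' b' := by
  cases b <;> cases b' <;> simp [letterCode] <;> omega

theorem letterCode_true_lt_false : letterCode k true < letterCode k false := by
  simp [letterCode]

theorem letterCode_decode {m : ℕ} (hm : 1 ≤ m) :
    letterCode ((m - 1) / 2) (decide (m % 2 = 1)) = m := by
  rcases Nat.mod_two_eq_zero_or_one m with h | h <;> simp [letterCode, h] <;> omega

end letterCode

/-- Standardization numbers the cells in this order: by entry, the cells of a primed letter
by increasing row, those of an unprimed letter by increasing column. -/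
def stdKey (T : ℕ × ℕ → ℕ) (c : ℕ × ℕ) : ℕ ×ₗ ℕ :=
  toLex (T c, if T c % 2 = 1 then c.1 else c.2)

section stdKey

variable {T : ℕ × ℕ → ℕ} {c c' : ℕ × ℕ}

theorem stdKey_lt_of_lt (h : T c < T c') : stdKey T c < stdKey T c' :=
  Prod.Lex.toLex_lt_toLex.mpr (Or.inl h)

theorem stdKey_lt_iff_of_odd (h : T c = T c') (hodd : T c % 2 = 1) :
    stdKey T c < stdKey T c' ↔ c.1 < c'.1 := by
  rw [stdKey, stdKey, Prod.Lex.toLex_lt_toLex, ← h, if_pos hodd, if_pos hodd]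
  simp

theorem stdKey_lt_iff_of_even (h : T c = T c') (hev : T c % 2 = 0) :
    stdKey T c < stdKey T c' ↔ c.2 < c'.2 := by
  rw [stdKey, stdKey, Prod.Lex.toLex_lt_toLex, ← h, if_neg (by omega), if_neg (by omega)]
  simp

theorem le_of_stdKey_le (h : stdKey T c ≤ stdKey T c') : T c ≤ T c' :=
  (Prod.Lex.toLex_le_toLex.mp h).elim le_of_lt fun h => h.1.le

end stdKey

namespace ShSSYT

variable {n : ℕ} {lam : StrictPartition n}

theorem ext {T T' : ShSSYT lam} (h : T.entry = T'.entry) : T = T' := by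
  cases T; cases T'; cases h; rfl

variable (T : ShSSYT lam)

theorem entry_le_of_le {r r' j j' : ℕ} (h : (r, j) ∈ lam.cells) (h' : (r', j') ∈ lam.cells)
    (hr : r ≤ r') (hj : j ≤ j') : T.entry (r, j) ≤ T.entry (r', j') := by
  have hmid := StrictPartition.mk_mem_cells_of_le h h' hr
  exact (T.row_weak r j j' h hmid hj).trans (T.col_weak r r' j' hmid h' hr)

theorem col_lt_of_row_lt {c c' : ℕ × ℕ} (hc : c ∈ lam.cells) (hc' : c' ∈ lam.cells)
    (he : T.entry c = T.entry c') (hev : T.entry c % 2 = 0) (hr : c.1 < c'.1) : c'.2 < c.2 := by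
  obtain ⟨r, j⟩ := c
  obtain ⟨r', j'⟩ := c'
  by_contra! hj
  have hmid := StrictPartition.mk_mem_cells_of_le hc hc' hr.le
  have h1 := T.row_weak r j j' hc hmid hj
  have h2 := T.col_weak r r' j' hmid hc' hr.le
  have := T.col_unprimed r r' j' hmid hc' (by omega) (by omega)
  omega

theorem stdKey_injOn : Set.InjOn (stdKey T.entry) lam.cells := by
  rintro ⟨r, j⟩ hc ⟨r', j'⟩ hc' h
  have he : T.entry (r, j) = T.entry (r', j') := congrArg (fun x => (ofLex x).1) h
  have hsnd := congrArg (fun x => (ofLex x).2) h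
  simp only [stdKey, ofLex_toLex, ← he] at hsnd
  rcases Nat.mod_two_eq_zero_or_one (T.entry (r, j)) with hev | hodd
  · rw [if_neg (by omega), if_neg (by omega)] at hsnd
    subst hsnd
    rw [T.col_unprimed r r' j hc hc' he hev]
  · rw [if_pos hodd, if_pos hodd] at hsnd
    subst hsnd
    rw [T.row_primed r j j' hc hc' he hodd]

theorem stdKey_lt_of_row_lt {r j j' : ℕ} (hc : (r, j) ∈ lam.cells)
    (hc' : (r, j') ∈ lam.cells) (hj : j < j') : stdKey T.entry (r, j) < stdKey T.entry (r, j') := by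
  rcases (T.row_weak r j j' hc hc' hj.le).lt_or_eq with hlt | heq
  · exact stdKey_lt_of_lt hlt
  rcases Nat.mod_two_eq_zero_or_one (T.entry (r, j)) with hev | hodd
  · exact (stdKey_lt_iff_of_even heq hev).mpr hj
  · exact absurd (T.row_primed r j j' hc hc' heq hodd) hj.ne

theorem stdKey_lt_of_col_lt {r r' j : ℕ} (hc : (r, j) ∈ lam.cells)
    (hc' : (r', j) ∈ lam.cells) (hr : r < r') : stdKey T.entry (r, j) < stdKey T.entry (r', j) := by
  rcases (T.col_weak r r' j hc hc' hr.le).lt_or_eq with hlt | heq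
  · exact stdKey_lt_of_lt hlt
  rcases Nat.mod_two_eq_zero_or_one (T.entry (r, j)) with hev | hodd
  · exact absurd (T.col_unprimed r r' j hc hc' heq hev) hr.ne
  · exact (stdKey_lt_iff_of_odd heq hodd).mpr hr

theorem not_des_of_stdKey_lt {c c' : ℕ × ℕ} (hc : c ∈ lam.cells) (hc' : c' ∈ lam.cells)
    (hkey : stdKey T.entry c < stdKey T.entry c')
    (hl : (T.entry c - 1) / 2 = (T.entry c' - 1) / 2) :
    ¬((T.entry c % 2 = 0 ∧ c.1 < c'.1) ∨ (T.entry c' % 2 = 1 ∧ c'.1 ≤ c.1)) := by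
  have hle := le_of_stdKey_le hkey.le
  have h1 := T.entry_pos c hc
  have h1' := T.entry_pos c' hc'
  rintro (⟨hev, hr⟩ | ⟨hodd, hr⟩)
  · have he : T.entry c = T.entry c' := by omega
    exact lt_asymm ((stdKey_lt_iff_of_even he hev).mp hkey) (T.col_lt_of_row_lt hc hc' he hev hr)
  · have he : T.entry c = T.entry c' := by omega
    exact absurd ((stdKey_lt_iff_of_odd he (he ▸ hodd)).mp hkey) (not_lt.mpr hr)

noncomputable def stdEntry (c : ℕ × ℕ) : ℕ :=
  if c ∈ lam.cells then lam.cellsFinset.rankBy (stdKey T.entry) c else 0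

variable {T}

theorem stdEntry_of_mem {c : ℕ × ℕ} (hc : c ∈ lam.cells) :
    T.stdEntry c = lam.cellsFinset.rankBy (stdKey T.entry) c :=
  if_pos hc

theorem stdEntry_lt_stdEntry_iff {c c' : ℕ × ℕ} (hc : c ∈ lam.cells) (hc' : c' ∈ lam.cells) :
    T.stdEntry c < T.stdEntry c' ↔ stdKey T.entry c < stdKey T.entry c' := by
  rw [stdEntry_of_mem hc, stdEntry_of_mem hc']
  exact rankBy_lt_rankBy_iff (lam.mem_cellsFinset.mpr hc')

variable (T)

theorem bijOn_stdEntry : Set.BijOn T.stdEntry lam.cells (Set.Icc 1 n) := by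
  have h := bijOn_rankBy (s := lam.cellsFinset) (K := stdKey T.entry)
    (by simpa using T.stdKey_injOn)
  rw [lam.coe_cellsFinset, lam.card_cellsFinset] at h
  exact h.congr fun c hc => (stdEntry_of_mem hc).symm

noncomputable def cellOfStd (v : ℕ) : ℕ × ℕ := Function.invFunOn T.stdEntry lam.cells v

theorem cellOfStd_stdEntry {c : ℕ × ℕ} (hc : c ∈ lam.cells) : T.cellOfStd (T.stdEntry c) = c :=
  T.bijOn_stdEntry.invOn_invFunOn.1 hc

noncomputable def standardize : SignedShSYT lam where
  entry := T.stdEntry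
  sign v := decide (v ∈ Set.Icc 1 n ∧ T.entry (T.cellOfStd v) % 2 = 1)
  zero_outside _ hc := if_neg hc
  sign_outside _ hv := decide_eq_false fun h => hv h.1
  bijOn := T.bijOn_stdEntry
  row_inc _ _ _ hc hc' hj := (stdEntry_lt_stdEntry_iff hc hc').mpr (T.stdKey_lt_of_row_lt hc hc' hj)
  col_inc _ _ _ hc hc' hr := (stdEntry_lt_stdEntry_iff hc hc').mpr (T.stdKey_lt_of_col_lt hc hc' hr)

noncomputable def stdSeq (p : Fin n) : ℕ := (T.entry (T.cellOfStd (p + 1)) - 1) / 2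

theorem standardize_entry : T.standardize.entry = T.stdEntry := rfl

theorem sign_standardize_stdEntry {c : ℕ × ℕ} (hc : c ∈ lam.cells) :
    T.standardize.sign (T.stdEntry c) = decide (T.entry c % 2 = 1) := by
  have hv := T.bijOn_stdEntry.mapsTo hc
  simp only [standardize, T.cellOfStd_stdEntry hc, hv, true_and]

theorem letterAt_stdSeq_stdEntry {c : ℕ × ℕ} (hc : c ∈ lam.cells) :
    letterAt T.stdSeq (T.stdEntry c) = (T.entry c - 1) / 2 := by
  have hv := T.bijOn_stdEntry.mapsTo hc
  rw [letterAt_of_mem_Icc _ hv, stdSeq]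
  simp only
  rw [Nat.sub_add_cancel hv.1, T.cellOfStd_stdEntry hc]

theorem monotone_stdSeq : Monotone T.stdSeq := by
  intro p q hpq
  have hp := T.bijOn_stdEntry.surjOn (⟨by omega, p.2⟩ : (p : ℕ) + 1 ∈ Set.Icc 1 n)
  have hq := T.bijOn_stdEntry.surjOn (⟨by omega, q.2⟩ : (q : ℕ) + 1 ∈ Set.Icc 1 n)
  obtain ⟨c, hc, hcp⟩ := hp
  obtain ⟨c', hc', hcq⟩ := hq
  have hkey : stdKey T.entry c ≤ stdKey T.entry c' := not_lt.mp fun h =>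
    absurd ((stdEntry_lt_stdEntry_iff hc' hc).mpr h) (by rw [hcp, hcq]; simpa using hpq)
  simp only [stdSeq, ← hcp, ← hcq, T.cellOfStd_stdEntry hc, T.cellOfStd_stdEntry hc']
  exact Nat.div_le_div_right (Nat.sub_le_sub_right (le_of_stdKey_le hkey) 1)

theorem isFundSeq_stdSeq {e : ℕ →₀ ℕ}
    (hcont : ∀ k, Nat.card {c : ℕ × ℕ // c ∈ lam.cells ∧ (T.entry c - 1) / 2 = k} = e k) :
    IsFundSeq n T.standardize.Des e T.stdSeq := by
  refine ⟨T.monotone_stdSeq, ?_, fun k => ?_⟩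
  · rintro j h hl ⟨c, hc, c', hc', hv, hv', hclause⟩
    rw [standardize_entry] at hv hv'
    have hkey : stdKey T.entry c < stdKey T.entry c' :=
      (stdEntry_lt_stdEntry_iff hc hc').mp (by omega)
    simp only [stdSeq] at hl
    rw [← hv', ← hv, T.cellOfStd_stdEntry hc, T.cellOfStd_stdEntry hc'] at hl
    rw [← hv', ← hv, T.sign_standardize_stdEntry hc, T.sign_standardize_stdEntry hc'] at hclause
    simp only [decide_eq_false_iff_not, decide_eq_true_eq, Nat.mod_two_ne_one] at hclause
    exact T.not_des_of_stdKey_lt hc hc' hkey hl hclause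
  · rw [← hcont k, ← card_letterAt_eq_of_bijOn T.bijOn_stdEntry T.stdSeq k]
    exact Nat.card_congr (Equiv.subtypeEquivRight fun c => and_congr_right fun hc => by
      rw [T.letterAt_stdSeq_stdEntry hc])

end ShSSYT

/-! ### Filling signed standard shifted tableaux with letters -/

namespace SignedShSYT

variable {n : ℕ} {lam : StrictPartition n}

theorem ext {S S' : SignedShSYT lam} (he : S.entry = S'.entry) (hs : S.sign = S'.sign) :
    S = S' := by
  cases S; cases S'; cases he; cases hs; rfl

instance : Finite (SignedShSYT lam) := by
  refine Finite.of_injective (β := (lam.cellsFinset → Fin (n + 1)) × (Fin (n + 1) → Bool))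
    (fun S => (fun c => ⟨S.entry c, Nat.lt_succ_of_le
      (S.bijOn.mapsTo ((lam.mem_cellsFinset).mp c.2)).2⟩, fun v => S.sign v)) ?_
  intro S S' h
  obtain ⟨he, hs⟩ := Prod.mk.inj h
  refine ext (funext fun c => ?_) (funext fun v => ?_)
  · by_cases hc : c ∈ lam.cells
    · simpa using congrFun he ⟨c, lam.mem_cellsFinset.mpr hc⟩
    · rw [S.zero_outside c hc, S'.zero_outside c hc]
  · by_cases hv : v ∈ Set.Icc 1 n
    · simpa using congrFun hs ⟨v, Nat.lt_succ_of_le hv.2⟩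
    · rw [S.sign_outside v hv, S'.sign_outside v hv]

variable (S : SignedShSYT lam)

theorem cellOf_spec {v : ℕ} (hv : v ∈ Set.Icc 1 n) :
    S.cellOf v ∈ lam.cells ∧ S.entry (S.cellOf v) = v :=
  Classical.epsilon_spec (S.bijOn.surjOn hv)

theorem cellOf_entry {c : ℕ × ℕ} (hc : c ∈ lam.cells) : S.cellOf (S.entry c) = c :=
  S.bijOn.injOn (S.cellOf_spec (S.bijOn.mapsTo hc)).1 hc (S.cellOf_spec (S.bijOn.mapsTo hc)).2

theorem entry_le_of_le {r r' j j' : ℕ} (h : (r, j) ∈ lam.cells) (h' : (r', j') ∈ lam.cells)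
    (hr : r ≤ r') (hj : j ≤ j') : S.entry (r, j) ≤ S.entry (r', j') := by
  have hmid := StrictPartition.mk_mem_cells_of_le h h' hr
  have h1 : S.entry (r, j) ≤ S.entry (r, j') :=
    hj.eq_or_lt.elim (fun hj => hj ▸ le_rfl) fun hj => (S.row_inc r j j' h hmid hj).le
  have h2 : S.entry (r, j') ≤ S.entry (r', j') :=
    hr.eq_or_lt.elim (fun hr => hr ▸ le_rfl) fun hr => (S.col_inc r r' j' hmid h' hr).le
  exact h1.trans h2

theorem row_cellOf_of_notMem_Des {v : ℕ} (hv : 1 ≤ v) (hvn : v + 1 ≤ n) (hD : v ∉ S.Des) :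
    (S.sign v = false → (S.cellOf (v + 1)).1 ≤ (S.cellOf v).1) ∧
      (S.sign (v + 1) = true → (S.cellOf v).1 < (S.cellOf (v + 1)).1) := by
  have h1 := S.cellOf_spec (v := v) ⟨hv, by omega⟩
  have h2 := S.cellOf_spec (v := v + 1) ⟨by omega, hvn⟩
  constructor
  · intro hs
    by_contra! hrow
    exact hD ⟨_, h1.1, _, h2.1, h1.2, h2.2, Or.inl ⟨hs, hrow⟩⟩
  · intro hs
    by_contra! hrow
    exact hD ⟨_, h1.1, _, h2.1, h1.2, h2.2, Or.inr ⟨hs, hrow⟩⟩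

theorem sign_succ_eq_false {v : ℕ} (hv : 1 ≤ v) (hvn : v + 1 ≤ n) (hD : v ∉ S.Des)
    (hs : S.sign v = false) :
    S.sign (v + 1) = false ∧ (S.cellOf (v + 1)).1 ≤ (S.cellOf v).1 := by
  obtain ⟨hunprimed, hprimed⟩ := S.row_cellOf_of_notMem_Des hv hvn hD
  refine ⟨?_, hunprimed hs⟩
  by_contra h
  rw [Bool.not_eq_false] at h
  exact absurd (hprimed h) (not_lt.mpr (hunprimed hs))

theorem sign_eq_true_of_succ {v : ℕ} (hv : 1 ≤ v) (hvn : v + 1 ≤ n) (hD : v ∉ S.Des)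
    (hs : S.sign (v + 1) = true) :
    S.sign v = true ∧ (S.cellOf v).1 < (S.cellOf (v + 1)).1 := by
  obtain ⟨hunprimed, hprimed⟩ := S.row_cellOf_of_notMem_Des hv hvn hD
  refine ⟨?_, hprimed hs⟩
  by_contra h
  rw [Bool.not_eq_true] at h
  exact absurd (hprimed hs) (not_lt.mpr (hunprimed h))

theorem sign_eq_false_of_forall_notMem_Des {u v : ℕ} (hu : 1 ≤ u) (huv : u ≤ v) (hv : v ≤ n)
    (hD : ∀ w, u ≤ w → w < v → w ∉ S.Des) (hs : S.sign u = false) :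
    S.sign v = false ∧ (S.cellOf v).1 ≤ (S.cellOf u).1 := by
  induction v, huv using Nat.le_induction with
  | base => exact ⟨hs, le_rfl⟩
  | succ v huv ih =>
    obtain ⟨hsv, hrow⟩ := ih (by omega) fun w h1 h2 => hD w h1 (by omega)
    obtain ⟨hsv', hrow'⟩ := S.sign_succ_eq_false (by omega) hv (hD v huv (by omega)) hsv
    exact ⟨hsv', hrow'.trans hrow⟩

theorem sign_eq_true_of_forall_notMem_Des {u v : ℕ} (hu : 1 ≤ u) (huv : u < v) (hv : v ≤ n)
    (hD : ∀ w, u ≤ w → w < v → w ∉ S.Des) (hs : S.sign v = true) :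
    S.sign u = true ∧ (S.cellOf u).1 < (S.cellOf v).1 := by
  induction v, huv using Nat.le_induction with
  | base => exact S.sign_eq_true_of_succ hu hv (hD u le_rfl (by omega)) hs
  | succ v huv ih =>
    obtain ⟨hsv, hrow⟩ := S.sign_eq_true_of_succ (by omega) hv (hD v (by omega) (by omega)) hs
    obtain ⟨hsu, hrow'⟩ := ih (by omega) (fun w h1 h2 => hD w h1 (by omega)) hsv
    exact ⟨hsu, hrow'.trans hrow⟩

variable {e : ℕ →₀ ℕ} (f : Fin n → ℕ)

noncomputable def fillEntry (c : ℕ × ℕ) : ℕ :=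
  if c ∈ lam.cells then letterCode (letterAt f (S.entry c)) (S.sign (S.entry c)) else 0

variable {S f}

theorem fillEntry_of_mem {c : ℕ × ℕ} (hc : c ∈ lam.cells) :
    S.fillEntry f c = letterCode (letterAt f (S.entry c)) (S.sign (S.entry c)) :=
  if_pos hc

theorem sign_entry_eq_false_of_letterAt_eq (hf : IsFundSeq n S.Des e f) {c c' : ℕ × ℕ}
    (hc : c ∈ lam.cells) (hc' : c' ∈ lam.cells) (hlt : S.entry c < S.entry c')
    (hl : letterAt f (S.entry c) = letterAt f (S.entry c')) (hs : S.sign (S.entry c) = false) :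
    S.sign (S.entry c') = false ∧ c'.1 ≤ c.1 := by
  have hu := S.bijOn.mapsTo hc
  have hv := S.bijOn.mapsTo hc'
  have := S.sign_eq_false_of_forall_notMem_Des hu.1 hlt.le hv.2
    (hf.notMem_of_letterAt_eq hu.1 hv.2 hl) hs
  rwa [S.cellOf_entry hc, S.cellOf_entry hc'] at this

theorem sign_entry_eq_true_of_letterAt_eq (hf : IsFundSeq n S.Des e f) {c c' : ℕ × ℕ}
    (hc : c ∈ lam.cells) (hc' : c' ∈ lam.cells) (hlt : S.entry c < S.entry c')
    (hl : letterAt f (S.entry c) = letterAt f (S.entry c')) (hs : S.sign (S.entry c') = true) :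
    S.sign (S.entry c) = true ∧ c.1 < c'.1 := by
  have hu := S.bijOn.mapsTo hc
  have hv := S.bijOn.mapsTo hc'
  have := S.sign_eq_true_of_forall_notMem_Des hu.1 hlt hv.2
    (hf.notMem_of_letterAt_eq hu.1 hv.2 hl) hs
  rwa [S.cellOf_entry hc, S.cellOf_entry hc'] at this

theorem stdKey_fillEntry_lt (hf : IsFundSeq n S.Des e f) {c c' : ℕ × ℕ} (hc : c ∈ lam.cells)
    (hc' : c' ∈ lam.cells) (hlt : S.entry c < S.entry c') :
    stdKey (S.fillEntry f) c < stdKey (S.fillEntry f) c' := by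
  have hu := S.bijOn.mapsTo hc
  have hv := S.bijOn.mapsTo hc'
  rcases (hf.1.letterAt_le hu.1 hlt.le hv.2).lt_or_eq with hl | hl
  · apply stdKey_lt_of_lt
    rw [fillEntry_of_mem hc, fillEntry_of_mem hc']
    exact letterCode_lt_letterCode hl
  cases hs' : S.sign (S.entry c')
  · cases hs : S.sign (S.entry c)
    · obtain ⟨-, hrow⟩ := sign_entry_eq_false_of_letterAt_eq hf hc hc' hlt hl hs
      have hcode : S.fillEntry f c = S.fillEntry f c' := by
        rw [fillEntry_of_mem hc, fillEntry_of_mem hc', hl, hs, hs']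
      rw [stdKey_lt_iff_of_even hcode (by simp [fillEntry_of_mem hc, hs])]
      by_contra! hcol
      obtain ⟨r, j⟩ := c
      obtain ⟨r', j'⟩ := c'
      exact absurd (S.entry_le_of_le hc' hc hrow hcol) (not_le.mpr hlt)
    · apply stdKey_lt_of_lt
      rw [fillEntry_of_mem hc, fillEntry_of_mem hc', hl, hs, hs']
      exact letterCode_true_lt_false
  · obtain ⟨hs, hrow⟩ := sign_entry_eq_true_of_letterAt_eq hf hc hc' hlt hl hs'
    have hcode : S.fillEntry f c = S.fillEntry f c' := by
      rw [fillEntry_of_mem hc, fillEntry_of_mem hc', hl, hs, hs']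
    exact (stdKey_lt_iff_of_odd hcode (by simp [fillEntry_of_mem hc, hs])).mpr hrow

theorem entry_lt_entry_iff_stdKey_lt (hf : IsFundSeq n S.Des e f) {c c' : ℕ × ℕ}
    (hc : c ∈ lam.cells) (hc' : c' ∈ lam.cells) :
    S.entry c < S.entry c' ↔ stdKey (S.fillEntry f) c < stdKey (S.fillEntry f) c' := by
  refine ⟨stdKey_fillEntry_lt hf hc hc', fun hkey => ?_⟩
  rcases lt_trichotomy (S.entry c) (S.entry c') with hlt | heq | hgt
  · exact hlt
  · exact absurd hkey (S.bijOn.injOn hc hc' heq ▸ lt_irrefl _)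
  · exact absurd hkey (stdKey_fillEntry_lt hf hc' hc hgt).asymm

variable (S f) in
noncomputable def toShSSYT (hf : IsFundSeq n S.Des e f) : ShSSYT lam where
  entry := S.fillEntry f
  zero_outside c hc := if_neg hc
  entry_pos c hc := by
    rw [fillEntry_of_mem hc]
    exact one_le_letterCode
  row_weak r j j' hc hc' hj := by
    rcases hj.lt_or_eq with hj | rfl
    · exact le_of_stdKey_le (stdKey_fillEntry_lt hf hc hc' (S.row_inc r j j' hc hc' hj)).le
    · exact le_rfl
  col_weak r r' j hc hc' hr := by
    rcases hr.lt_or_eq with hr | rfl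
    · exact le_of_stdKey_le (stdKey_fillEntry_lt hf hc hc' (S.col_inc r r' j hc hc' hr)).le
    · exact le_rfl
  row_primed r j j' hc hc' he hodd := by
    by_contra hne
    rcases Nat.lt_or_gt_of_ne hne with hj | hj
    · exact lt_irrefl r <| (stdKey_lt_iff_of_odd he hodd).mp <|
        stdKey_fillEntry_lt hf hc hc' (S.row_inc r j j' hc hc' hj)
    · exact lt_irrefl r <| (stdKey_lt_iff_of_odd he.symm (he ▸ hodd)).mp <|
        stdKey_fillEntry_lt hf hc' hc (S.row_inc r j' j hc' hc hj)
  col_unprimed r r' j hc hc' he hev := by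
    by_contra hne
    rcases Nat.lt_or_gt_of_ne hne with hr | hr
    · exact lt_irrefl j <| (stdKey_lt_iff_of_even he hev).mp <|
        stdKey_fillEntry_lt hf hc hc' (S.col_inc r r' j hc hc' hr)
    · exact lt_irrefl j <| (stdKey_lt_iff_of_even he.symm (he ▸ hev)).mp <|
        stdKey_fillEntry_lt hf hc' hc (S.col_inc r' r j hc' hc hr)

theorem toShSSYT_entry (hf : IsFundSeq n S.Des e f) : (S.toShSSYT f hf).entry = S.fillEntry f :=
  rfl

theorem toShSSYT_diag (hf : IsFundSeq n S.Des e f)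
    (hS : ∀ j : ℕ, (j, j) ∈ lam.cells → S.sign (S.entry (j, j)) = false) :
    ∀ j : ℕ, (j, j) ∈ lam.cells → (S.toShSSYT f hf).entry (j, j) % 2 = 0 := fun j hj => by
  simp [toShSSYT_entry, fillEntry_of_mem hj, hS j hj]

theorem card_toShSSYT_letter (hf : IsFundSeq n S.Des e f) (k : ℕ) :
    Nat.card {c : ℕ × ℕ // c ∈ lam.cells ∧ ((S.toShSSYT f hf).entry c - 1) / 2 = k} = e k := by
  rw [(hf.2.2 k), ← card_letterAt_eq_of_bijOn S.bijOn f k]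
  refine Nat.card_congr (Equiv.subtypeEquivRight fun c => and_congr_right fun hc => ?_)
  rw [toShSSYT_entry, fillEntry_of_mem hc, letterCode_sub_one_div_two]

end SignedShSYT

/-! ### The standardization bijection -/

theorem SignedShSYT.standardize_toShSSYT {n : ℕ} {lam : StrictPartition n} {e : ℕ →₀ ℕ}
    {S : SignedShSYT lam} {f : Fin n → ℕ} (hf : IsFundSeq n S.Des e f) :
    (S.toShSSYT f hf).standardize = S := by
  set T := S.toShSSYT f hf
  have hentry : T.stdEntry = S.entry := by
    funext c
    by_cases hc : c ∈ lam.cells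
    · have hbij : Set.BijOn S.entry lam.cellsFinset (Set.Icc 1 #lam.cellsFinset) := by
        simpa [lam.card_cellsFinset] using S.bijOn
      rw [ShSSYT.stdEntry_of_mem hc, ← eq_rankBy_of_bijOn hbij _ (lam.mem_cellsFinset.mpr hc)]
      intro a ha b hb
      exact entry_lt_entry_iff_stdKey_lt hf (lam.mem_cellsFinset.mp ha) (lam.mem_cellsFinset.mp hb)
    · rw [ShSSYT.stdEntry, if_neg hc, S.zero_outside c hc]
  refine SignedShSYT.ext hentry (funext fun v => ?_)
  by_cases hv : v ∈ Set.Icc 1 n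
  · obtain ⟨c, hc, rfl⟩ := S.bijOn.surjOn hv
    rw [← hentry, T.sign_standardize_stdEntry hc, hentry]
    change decide (S.fillEntry f c % 2 = 1) = _
    cases h : S.sign (S.entry c) <;> simp [SignedShSYT.fillEntry_of_mem hc, h]
  · rw [T.standardize.sign_outside v hv, S.sign_outside v hv]

theorem ShSSYT.toShSSYT_standardize {n : ℕ} {lam : StrictPartition n} {e : ℕ →₀ ℕ}
    (T : ShSSYT lam)
    (hcont : ∀ k, Nat.card {c : ℕ × ℕ // c ∈ lam.cells ∧ (T.entry c - 1) / 2 = k} = e k) :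
    T.standardize.toShSSYT T.stdSeq (T.isFundSeq_stdSeq hcont) = T := by
  refine ShSSYT.ext (funext fun c => ?_)
  by_cases hc : c ∈ lam.cells
  · rw [SignedShSYT.toShSSYT_entry, SignedShSYT.fillEntry_of_mem hc, T.standardize_entry,
      T.letterAt_stdSeq_stdEntry hc, T.sign_standardize_stdEntry hc,
      letterCode_decode (T.entry_pos c hc)]
  · rw [(T.standardize.toShSSYT _ _).zero_outside c hc, T.zero_outside c hc]

noncomputable def standardizationEquiv {n : ℕ} (lam : StrictPartition n) (e : ℕ →₀ ℕ) :
    {p : {S : SignedShSYT lam // ∀ j : ℕ, (j, j) ∈ lam.cells → S.sign (S.entry (j, j)) = false} ×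
        (Fin n → ℕ) // IsFundSeq n p.1.1.Des e p.2} ≃
      {T : ShSSYT lam // (∀ j : ℕ, (j, j) ∈ lam.cells → T.entry (j, j) % 2 = 0) ∧
        ∀ k, Nat.card {c : ℕ × ℕ // c ∈ lam.cells ∧ (T.entry c - 1) / 2 = k} = e k} where
  toFun p := ⟨p.1.1.1.toShSSYT p.1.2 p.2, SignedShSYT.toShSSYT_diag p.2 p.1.1.2,
    SignedShSYT.card_toShSSYT_letter p.2⟩
  invFun T := ⟨(⟨T.1.standardize, fun j hj => by
      rw [T.1.standardize_entry, T.1.sign_standardize_stdEntry hj, T.2.1 j hj]; rfl⟩,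
    T.1.stdSeq), T.1.isFundSeq_stdSeq T.2.2⟩
  left_inv p := by
    obtain ⟨⟨⟨S, -⟩, f⟩, hf⟩ := p
    have hS := SignedShSYT.standardize_toShSSYT hf
    refine Subtype.ext (Prod.ext (Subtype.ext hS) ?_)
    exact ((S.toShSSYT f hf).isFundSeq_stdSeq (SignedShSYT.card_toShSSYT_letter hf)).unique hf
  right_inv T := Subtype.ext (T.1.toShSSYT_standardize T.2.2)

/-- For every strict partition `λ` of `n`, the Schur P-function
satisfies `P_λ = Σ_{S ∈ ShSYT^±(λ)} F_{Des(S)}`, summed over signed standard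
shifted tableaux of shape `λ` with no signed entries on the main diagonal. -/
theorem schurP_eq_sum_fund {n : ℕ} (lam : StrictPartition n) :
    schurP n lam =
      ∑ᶠ S : {S : SignedShSYT lam //
          ∀ j : ℕ, (j, j) ∈ lam.cells → S.sign (S.entry (j, j)) = false},
        fundF n (SignedShSYT.Des S.val) := by
  have : Fintype {S : SignedShSYT lam //
      ∀ j : ℕ, (j, j) ∈ lam.cells → S.sign (S.entry (j, j)) = false} := Fintype.ofFinite _
  rw [finsum_eq_sum_of_fintype]
  funext e
  simp only [Finset.sum_apply, fundF_eq_card]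
  rw [← Nat.cast_sum, ← Nat.card_sigma]
  exact congrArg Nat.cast <| Nat.card_congr <| (standardizationEquiv lam e).symm.trans <|
    Equiv.subtypeProdEquivSigmaSubtype fun (S : {S : SignedShSYT lam // _}) f =>
      IsFundSeq n S.1.Des e f
end

section
/- Let T be a standard shifted tableau of strict shape λ of n. Then: (a) i ∈ Peak(T) if and only if the values i−1, i, i+1 occur in the reading word w(T) in the order (i−1)(i+1)(i) or (i+1)(i−1)(i); (b) for every signed standard shifted tableau S whose underlying unsigned tableau is T, Peak(T) ⊆ Spike(Des(S)); and (c) for every subset D ⊆ {2,…,n−1} with Peak(T) ⊆ D, there exists a signed standard shifted tableau S whose underlying unsigned tableau is T such that Spike(Des(S)) = D. -/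
open scoped Classical

/-! Entries increase along rows, so for consecutive values the reading order is decided by rows
alone, and `i` is a peak of `T` exactly when it is read after both `i - 1` and `i + 1`.
Over `T`, a signed descent at `i` depends only on the sign of `i` when `i ∈ Des T`, and only on
the sign of `i + 1` otherwise. At a peak `i` both `i - 1` and `i` are thus governed by the sign
of `i`, with opposite outcomes, so `i ∈ Spike (Des S)`. Conversely the signs can realize any
descent set `E` that is consistent at the peaks, and every `D` is `Spike E` for
`E = {k | #(D ∩ [1, k]) odd}`. The shifted shape enters only through `1 ∉ Des T`: a cell off the
first row holds an entry at least `3`. -/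

namespace StrictPartition

variable {n : ℕ} {μ : StrictPartition n} {r j : ℕ}

theorem mem_cells_of_mem_cells_succ (h : (r + 1, j) ∈ μ.cells) (hr : 1 ≤ r) :
    (r, j) ∈ μ.cells := by
  obtain ⟨hlen, -, hrj, hj⟩ := h
  dsimp only at hlen hrj hj
  have hlen' : r - 1 < μ.parts.length := by omega
  have hpart : μ.parts.get ⟨r - 1, hlen'⟩ > μ.parts.get ⟨r + 1 - 1, hlen⟩ :=
    μ.sorted.rel_get_of_lt (by simp only [Fin.mk_lt_mk]; omega)
  exact ⟨hlen', hr, by dsimp only; omega, by dsimp only; omega⟩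

theorem mem_cells_pred_of_lt (h : (r, j) ∈ μ.cells) (hrj : r < j) : (r, j - 1) ∈ μ.cells := by
  obtain ⟨hlen, hr, -, hj⟩ := h
  dsimp only at hlen hr hj
  exact ⟨hlen, hr, by dsimp only; omega, by dsimp only; omega⟩

end StrictPartition

namespace ShSYT

variable {n : ℕ} {μ : StrictPartition n} (T : ShSYT μ)

theorem one_le_entry {c : ℕ × ℕ} (hc : c ∈ μ.cells) : 1 ≤ T.entry c :=
  (T.bijOn.mapsTo hc).1

/-- The entry at `(r, j)` exceeds those at `(r - 1, j)` and `(r - 1, j - 1)`. -/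
theorem three_le_entry {c : ℕ × ℕ} (hc : c ∈ μ.cells) (hr : 2 ≤ c.1) : 3 ≤ T.entry c := by
  obtain ⟨r, j⟩ := c
  obtain ⟨r, rfl⟩ : ∃ r', r = r' + 1 := ⟨r - 1, by dsimp only at hr; omega⟩
  have hrj : r + 1 ≤ j := hc.2.2.1
  have hup := StrictPartition.mem_cells_of_mem_cells_succ hc (by dsimp only at hr; omega)
  have hupleft := StrictPartition.mem_cells_pred_of_lt hup (by omega)
  have := T.one_le_entry hupleft
  have := T.row_inc r (j - 1) j hupleft hup (by omega)
  have := T.col_inc r (r + 1) j hup hc (by omega)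
  omega

theorem Des_subset_Ico : T.Des ⊆ Set.Ico 1 n := by
  rintro i ⟨c, hc, c', hc', rfl, hsucc, -⟩
  have := (T.bijOn.mapsTo hc').2
  exact ⟨T.one_le_entry hc, by omega⟩

theorem one_notMem_Des : 1 ∉ T.Des := by
  rintro ⟨c, hc, c', hc', -, hc'2, hlt⟩
  have := T.three_le_entry hc' (by obtain ⟨-, h, -⟩ := hc; omega)
  omega

theorem Peak_subset_Ico : T.Peak ⊆ Set.Ico 2 n := by
  rintro i ⟨-, hi⟩
  obtain ⟨h1, hn⟩ := T.Des_subset_Ico hi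
  have : i ≠ 1 := by rintro rfl; exact T.one_notMem_Des hi
  exact ⟨by omega, hn⟩

theorem cellOf_spec {v : ℕ} (hv : v ∈ Set.Icc 1 n) :
    T.cellOf v ∈ μ.cells ∧ T.entry (T.cellOf v) = v :=
  Classical.epsilon_spec (T.bijOn.surjOn hv)

theorem cellOf_entry {c : ℕ × ℕ} (hc : c ∈ μ.cells) : T.cellOf (T.entry c) = c := by
  obtain ⟨hmem, hentry⟩ := T.cellOf_spec (T.bijOn.mapsTo hc)
  exact T.bijOn.injOn hmem hc hentry

theorem exists_cells_entry_eq_iff {u v : ℕ} (hu : u ∈ Set.Icc 1 n) (hv : v ∈ Set.Icc 1 n)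
    (P : ℕ × ℕ → ℕ × ℕ → Prop) :
    (∃ c ∈ μ.cells, ∃ c' ∈ μ.cells, T.entry c = u ∧ T.entry c' = v ∧ P c c') ↔
      P (T.cellOf u) (T.cellOf v) := by
  constructor
  · rintro ⟨c, hc, c', hc', rfl, rfl, hP⟩
    rwa [T.cellOf_entry hc, T.cellOf_entry hc']
  · intro hP
    exact ⟨_, (T.cellOf_spec hu).1, _, (T.cellOf_spec hv).1,
      (T.cellOf_spec hu).2, (T.cellOf_spec hv).2, hP⟩

theorem mem_Des_iff {i : ℕ} (h1 : 1 ≤ i) (hn : i + 1 ≤ n) :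
    i ∈ T.Des ↔ (T.cellOf i).1 < (T.cellOf (i + 1)).1 :=
  T.exists_cells_entry_eq_iff ⟨h1, by omega⟩ ⟨by omega, hn⟩ fun c c' => c.1 < c'.1

theorem col_lt_of_row_eq {u v : ℕ} (hu : u ∈ Set.Icc 1 n) (hv : v ∈ Set.Icc 1 n) (huv : u < v)
    (hrow : (T.cellOf u).1 = (T.cellOf v).1) : (T.cellOf u).2 < (T.cellOf v).2 := by
  obtain ⟨hcu, hu'⟩ := T.cellOf_spec hu
  obtain ⟨hcv, hv'⟩ := T.cellOf_spec hv
  by_contra! hcol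
  rcases hcol.lt_or_eq with hlt | heq
  · have hcv' : ((T.cellOf u).1, (T.cellOf v).2) = T.cellOf v := Prod.ext hrow rfl
    have := T.row_inc (T.cellOf u).1 (T.cellOf v).2 (T.cellOf u).2 (hcv' ▸ hcv) hcu hlt
    rw [hcv', Prod.mk.eta, hu', hv'] at this
    omega
  · have : T.cellOf v = T.cellOf u := Prod.ext hrow.symm heq
    rw [this, hu'] at hv'
    omega

theorem before_iff_row_le {u v : ℕ} (hu : u ∈ Set.Icc 1 n) (hv : v ∈ Set.Icc 1 n) (huv : u < v) :
    T.before u v ↔ (T.cellOf v).1 ≤ (T.cellOf u).1 := by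
  have := T.col_lt_of_row_eq hu hv huv
  unfold before
  omega

theorem before_iff_row_lt {u v : ℕ} (hu : u ∈ Set.Icc 1 n) (hv : v ∈ Set.Icc 1 n) (huv : u < v) :
    T.before v u ↔ (T.cellOf u).1 < (T.cellOf v).1 := by
  have := T.col_lt_of_row_eq hu hv huv
  unfold before
  omega

theorem mem_Peak_iff_before {i : ℕ} (h2 : 2 ≤ i) (hn : i ≤ n - 1) :
    i ∈ T.Peak ↔ (T.before (i - 1) (i + 1) ∧ T.before (i + 1) i) ∨
      (T.before (i + 1) (i - 1) ∧ T.before (i - 1) i) := by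
  obtain ⟨k, rfl⟩ : ∃ k, i = k + 1 := ⟨i - 1, by omega⟩
  have hk : k ∈ Set.Icc 1 n := ⟨by omega, by omega⟩
  have hk1 : k + 1 ∈ Set.Icc 1 n := ⟨by omega, by omega⟩
  have hk2 : k + 1 + 1 ∈ Set.Icc 1 n := ⟨by omega, by omega⟩
  simp only [Peak, Set.mem_ofPred_eq, Nat.add_sub_cancel,
    T.mem_Des_iff (i := k) (by omega) (by omega), T.mem_Des_iff (i := k + 1) (by omega) (by omega),
    T.before_iff_row_le hk hk2 (by omega), T.before_iff_row_lt hk1 hk2 (by omega),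
    T.before_iff_row_lt hk hk2 (by omega), T.before_iff_row_le hk hk1 (by omega)]
  omega

end ShSYT

namespace SignedShSYT

variable {n : ℕ} {μ : StrictPartition n} {S : SignedShSYT μ} {T : ShSYT μ}

theorem mem_Des_iff (hS : S.entry = T.entry) {i : ℕ} (h1 : 1 ≤ i) (hn : i + 1 ≤ n) :
    i ∈ S.Des ↔ if i ∈ T.Des then S.sign i = false else S.sign (i + 1) = true := by
  have hrows := T.exists_cells_entry_eq_iff (u := i) (v := i + 1) ⟨h1, by omega⟩ ⟨by omega, hn⟩
    fun c c' => (S.sign i = false ∧ c.1 < c'.1) ∨ (S.sign (i + 1) = true ∧ c'.1 ≤ c.1)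
  rw [Des, Set.mem_ofPred_eq, hS, hrows, T.mem_Des_iff h1 hn]
  split_ifs with h
  · constructor
    · rintro (⟨hs, -⟩ | ⟨-, hle⟩)
      · exact hs
      · omega
    · exact fun hs => Or.inl ⟨hs, h⟩
  · constructor
    · rintro (⟨-, hlt⟩ | ⟨hs, -⟩)
      · exact absurd hlt h
      · exact hs
    · exact fun hs => Or.inr ⟨hs, by omega⟩

theorem xor_mem_Des_of_mem_Peak (hS : S.entry = T.entry) {i : ℕ} (hi : i ∈ T.Peak) :
    Xor (i - 1 ∈ S.Des) (i ∈ S.Des) := by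
  obtain ⟨h2, hn⟩ := T.Peak_subset_Ico hi
  obtain ⟨hnot, hdes⟩ := hi
  have hprev := mem_Des_iff hS (i := i - 1) (by omega) (by omega)
  rw [if_neg hnot, Nat.sub_add_cancel (by omega)] at hprev
  rw [hprev, mem_Des_iff hS (by omega) (by omega), if_pos hdes]
  cases S.sign i <;> simp [Xor]

end SignedShSYT

/-- Whether `i ∈ Des S` is governed by the sign of `i` if `i ∈ Des T` and by the sign of `i + 1`
otherwise; a sign is claimed twice only at a peak of `T`, where `hE` makes the demands agree. -/
theorem ShSYT.exists_signed_Des_eq {n : ℕ} {μ : StrictPartition n} (T : ShSYT μ) (E : Set ℕ)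
    (hE : ∀ j ∈ T.Peak, (j - 1 ∈ E ↔ j ∉ E)) :
    ∃ S : SignedShSYT μ, S.entry = T.entry ∧ ∀ i, 1 ≤ i → i + 1 ≤ n → (i ∈ S.Des ↔ i ∈ E) := by
  let sign : ℕ → Bool := fun j =>
    decide (j ∈ Set.Icc 1 n ∧ if j ∈ T.Des then j ∉ E else j - 1 ∈ E)
  have sign_outside : ∀ v ∉ Set.Icc 1 n, sign v = false := fun v hv => decide_eq_false fun h => hv h.1
  refine ⟨⟨T.entry, sign, T.zero_outside, sign_outside, T.bijOn, T.row_inc, T.col_inc⟩, rfl, ?_⟩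
  intro i h1 hn
  rw [SignedShSYT.mem_Des_iff rfl h1 hn]
  by_cases hdes : i ∈ T.Des
  · simp [sign, hdes, h1, show i ≤ n by omega]
  · by_cases hdes1 : i + 1 ∈ T.Des
    · have := hE (i + 1) ⟨by simpa using hdes, hdes1⟩
      simp only [Nat.add_sub_cancel] at this
      simp [sign, hdes, hdes1, this, show i < n by omega]
    · simp [sign, hdes, hdes1, show i < n by omega]

theorem exists_set_with_spikes (D : Set ℕ) :
    ∃ E : Set ℕ, ∀ i, 1 ≤ i → (Xor (i - 1 ∈ E) (i ∈ E) ↔ i ∈ D) := by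
  let parity : ℕ → Prop := fun k => Nat.rec False (fun k p => Xor (k + 1 ∈ D) p) k
  refine ⟨{k | parity k}, fun i hi => ?_⟩
  obtain ⟨k, rfl⟩ : ∃ k, i = k + 1 := ⟨i - 1, by omega⟩
  change Xor (parity k) (Xor (k + 1 ∈ D) (parity k)) ↔ k + 1 ∈ D
  generalize parity k = p
  by_cases p <;> simp [Xor, *]

theorem ShSYT.exists_signed_spike_eq {n : ℕ} {μ : StrictPartition n} (T : ShSYT μ) (D : Set ℕ)
    (hD : D ⊆ Set.Icc 2 (n - 1)) (hPD : T.Peak ⊆ D) :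
    ∃ S : SignedShSYT μ, S.entry = T.entry ∧
      {i : ℕ | 2 ≤ i ∧ i ≤ n - 1 ∧ Xor (i - 1 ∈ S.Des) (i ∈ S.Des)} = D := by
  obtain ⟨E, hE⟩ := exists_set_with_spikes D
  have hcompat : ∀ j ∈ T.Peak, (j - 1 ∈ E ↔ j ∉ E) := fun j hj =>
    xor_iff_iff_not.mp ((hE j (one_le_two.trans (T.Peak_subset_Ico hj).1)).mpr (hPD hj))
  obtain ⟨S, hST, hSE⟩ := T.exists_signed_Des_eq E hcompat
  have hspike : ∀ i, 2 ≤ i → i ≤ n - 1 → (Xor (i - 1 ∈ S.Des) (i ∈ S.Des) ↔ i ∈ D) := by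
    intro i h2 hn
    rw [hSE (i - 1) (by omega) (by omega), hSE i (by omega) (by omega)]
    exact hE i (by omega)
  refine ⟨S, hST, Set.ext fun i => ⟨fun ⟨h2, hn, hx⟩ => (hspike i h2 hn).mp hx, fun hi => ?_⟩⟩
  obtain ⟨h2, hn⟩ := hD hi
  exact ⟨h2, hn, (hspike i h2 hn).mpr hi⟩

/-- Let `T` be a standard shifted tableau of strict shape `λ` of
`n`.  Then (a) `i ∈ Peak(T)` iff `i−1, i, i+1` occur in the reading word in the
order `(i−1)(i+1)(i)` or `(i+1)(i−1)(i)`; (b) for every signed standard shifted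
tableau `S` with underlying unsigned tableau `T`, `Peak(T) ⊆ Spike(Des(S))`;
(c) for every `D ⊆ {2,…,n−1}` containing `Peak(T)` there is a signed standard
shifted tableau `S` with underlying unsigned tableau `T` and
`Spike(Des(S)) = D`. -/
theorem peak_spike_of_shifted_tableau
    {n : ℕ} (lam : StrictPartition n) (T : ShSYT lam) :
    (∀ i : ℕ, 2 ≤ i → i ≤ n - 1 →
      (i ∈ ShSYT.Peak T ↔
        ((T.before (i - 1) (i + 1) ∧ T.before (i + 1) i) ∨
         (T.before (i + 1) (i - 1) ∧ T.before (i - 1) i)))) ∧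
    (∀ S : SignedShSYT lam, S.entry = T.entry →
      ∀ i ∈ ShSYT.Peak T, Xor' ((i - 1) ∈ SignedShSYT.Des S) (i ∈ SignedShSYT.Des S)) ∧
    (∀ D : Set ℕ, D ⊆ Set.Icc 2 (n - 1) → ShSYT.Peak T ⊆ D →
      ∃ S : SignedShSYT lam, S.entry = T.entry ∧
        {i : ℕ | 2 ≤ i ∧ i ≤ n - 1 ∧
          Xor' ((i - 1) ∈ SignedShSYT.Des S) (i ∈ SignedShSYT.Des S)} = D) :=
  ⟨fun _ h2 hn => T.mem_Peak_iff_before h2 hn,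
    fun _ hS _ hi => SignedShSYT.xor_mem_Des_of_mem_Peak hS hi,
    T.exists_signed_spike_eq⟩
end
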